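/- Let g₁, g₂ be bijective isometries of H² and let z₁, z₂ ∈ H² be such that for i = 1, 2 the displacement d(zᵢ, gᵢ(zᵢ)) is positive and equals the infimum over all w ∈ H² of d(w, gᵢ(w)) (i.e., each gᵢ is hyperbolic and zᵢ lies on its invariant axis). Let γ be the isometry of the bidisk given by γ(x₁,x₂) = (g₁(x₁), g₂(x₂)) and set 𝐳 = (z₁,z₂). Then the equidistant hypersurfaces E(𝐳, γ(𝐳)) and E(𝐳, γ⁻¹(𝐳)) are disjoint: no point 𝐱 of the bidisk satisfies both ρ(𝐱,𝐳) = ρ(𝐱,γ(𝐳)) and ρ(𝐱,𝐳) = ρ(𝐱,γ⁻¹(𝐳)). -/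

import Mathlib

/-!
If `z` lies on the axis of a hyperbolic isometry `g` of `ℍ` with translation length `ℓ`, then `z`
is the midpoint of `g⁻¹ z` and `g z`: for the midpoint `m` of `[z, g z]`, minimality of the
displacement at `m` forces `g z` to be the midpoint of `[m, g m]`, so the orbit runs along a
geodesic. Being CAT(0), `ℍ` satisfies the Bruhat–Tits semi-parallelogram law
`2 d(x, m)² + 2 r² ≤ d(x, p)² + d(x, q)²` for the midpoint `m` of `p, q` with `d(p, q) = 2 r`.
Applied in both factors and summed, it gives
`2 ρ(x, 𝐳)² + 2 (ℓ₁² + ℓ₂²) ≤ ρ(x, γ 𝐳)² + ρ(x, γ⁻¹ 𝐳)²`, so no `x` is equidistant from the three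
points once `ℓ₁ > 0`.

Both facts are proved in the hyperboloid model, where `cosh d` is minus a Minkowski product and
being a midpoint is a linear condition. The semi-parallelogram law then comes down to comparing the
hyperbolic law of cosines with the Euclidean one, which is the convexity of `u ↦ cosh √u`.
-/

open UpperHalfPlane

noncomputable section

/-- The bidisk `ℍ × ℍ` with the `ℓ²` product metric. -/
abbrev Bidisk : Type := WithLp 2 (UpperHalfPlane × UpperHalfPlane)

/-- Package a pair of points of `ℍ` as a point of the bidisk. -/
def toBD (p : UpperHalfPlane × UpperHalfPlane) : Bidisk := (WithLp.equiv 2 _).symm p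

open Real Set

lemma convexOn_cosh_sqrt : ConvexOn ℝ (Ici 0) fun u : ℝ ↦ cosh √u := by
  have hasSum (u : ℝ) (hu : 0 ≤ u) : HasSum (fun n ↦ u ^ n / (2 * n).factorial) (cosh √u) := by
    simpa only [pow_mul, sq_sqrt hu] using hasSum_cosh √u
  refine ⟨convex_Ici 0, fun x hx y hy a b ha hb hab ↦ ?_⟩
  refine hasSum_le (fun n ↦ ?_) (hasSum _ ((convex_Ici 0) hx hy ha hb hab))
    (((hasSum x hx).mul_left a).add ((hasSum y hy).mul_left b))
  rw [← mul_div_assoc, ← mul_div_assoc, ← add_div]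
  exact div_le_div_of_nonneg_right ((convexOn_pow n).2 hx hy ha hb hab) (by positivity)

lemma sq_add_sq_sub_le_of_cosh_le {a b c t : ℝ} (ht : |t| ≤ 1)
    (h : cosh a * cosh b - sinh a * sinh b * t ≤ cosh c) :
    a ^ 2 + b ^ 2 - 2 * a * b * t ≤ c ^ 2 := by
  -- Both sides agree at `t = ±1`, and `cosh √u` is convex in `u = a² + b² - 2abt`.
  obtain ⟨ht₁, ht₂⟩ := abs_le.mp ht
  have hconv := convexOn_cosh_sqrt.2 (sq_nonneg (a - b)) (sq_nonneg (a + b))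
    (by linarith : 0 ≤ (1 + t) / 2) (by linarith : 0 ≤ (1 - t) / 2) (by ring)
  simp only [smul_eq_mul, sqrt_sq_eq_abs, cosh_abs, cosh_sub, cosh_add] at hconv
  have hle := cosh_le_cosh.mp ((hconv.trans_eq (by ring)).trans h)
  rw [abs_of_nonneg (sqrt_nonneg _), sqrt_le_left (abs_nonneg c), sq_abs] at hle
  linarith

lemma two_mul_sq_add_two_mul_sq_le {A B C l : ℝ} (hsum : cosh A + cosh B = 2 * cosh l * cosh C)
    (hdiff : (cosh A - cosh B) ^ 2 ≤ 4 * sinh l ^ 2 * sinh C ^ 2) :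
    2 * C ^ 2 + 2 * l ^ 2 ≤ A ^ 2 + B ^ 2 := by
  -- `t` is the cosine of the angle at the midpoint in the two hyperbolic laws of cosines.
  obtain ⟨t, ht, hA, hB⟩ : ∃ t, |t| ≤ 1 ∧ cosh A = cosh C * cosh l - sinh C * sinh l * t ∧
      cosh B = cosh C * cosh l + sinh C * sinh l * t := by
    have habs : |cosh B - cosh A| ≤ |2 * (sinh C * sinh l)| :=
      sq_le_sq.mp (by linarith)
    rcases eq_or_ne (sinh C * sinh l) 0 with h0 | h0
    · refine ⟨0, by simp, ?_, ?_⟩ <;> nlinarith [abs_nonneg (cosh B - cosh A)]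
    · have hs : sinh C * sinh l * ((cosh B - cosh A) / (2 * (sinh C * sinh l))) =
          (cosh B - cosh A) / 2 := by
        rw [mul_comm 2, ← div_div, mul_div_assoc', mul_div_cancel₀ _ h0]
      refine ⟨(cosh B - cosh A) / (2 * (sinh C * sinh l)), ?_, ?_, ?_⟩
      · rw [abs_div]
        exact div_le_one_of_le₀ habs (abs_nonneg _)
      all_goals linarith
  have h₁ := sq_add_sq_sub_le_of_cosh_le ht hA.ge
  have h₂ := sq_add_sq_sub_le_of_cosh_le (a := C) (b := l) (c := B) (t := -t)
    (by rwa [abs_neg]) (by linarith)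
  linarith

def minkowski (a b : ℝ × ℝ × ℝ) : ℝ := -(a.1 * b.1) + a.2.1 * b.2.1 + a.2.2 * b.2.2

section Minkowski

lemma minkowski_comm (a b : ℝ × ℝ × ℝ) : minkowski a b = minkowski b a := by
  simp only [minkowski]; ring

@[simp] lemma minkowski_add_left (a b c : ℝ × ℝ × ℝ) :
    minkowski (a + b) c = minkowski a c + minkowski b c := by
  simp only [minkowski, Prod.fst_add, Prod.snd_add]; ring

@[simp] lemma minkowski_sub_left (a b c : ℝ × ℝ × ℝ) :
    minkowski (a - b) c = minkowski a c - minkowski b c := by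
  simp only [minkowski, Prod.fst_sub, Prod.snd_sub]; ring

@[simp] lemma minkowski_smul_left (r : ℝ) (a c : ℝ × ℝ × ℝ) :
    minkowski (r • a) c = r * minkowski a c := by
  simp only [minkowski, Prod.smul_fst, Prod.smul_snd, smul_eq_mul]; ring

@[simp] lemma minkowski_add_right (a b c : ℝ × ℝ × ℝ) :
    minkowski c (a + b) = minkowski c a + minkowski c b := by
  simp only [minkowski_comm c, minkowski_add_left]

@[simp] lemma minkowski_sub_right (a b c : ℝ × ℝ × ℝ) :
    minkowski c (a - b) = minkowski c a - minkowski c b := by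
  simp only [minkowski_comm c, minkowski_sub_left]

@[simp] lemma minkowski_smul_right (r : ℝ) (a c : ℝ × ℝ × ℝ) :
    minkowski c (r • a) = r * minkowski c a := by
  simp only [minkowski_comm c, minkowski_smul_left]

variable {M N V W : ℝ × ℝ × ℝ}

lemma sq_add_sq_le_mul_minkowski_self (hM : minkowski M M = -1) (hN : minkowski N M = 0) :
    N.2.1 ^ 2 + N.2.2 ^ 2 ≤ M.1 ^ 2 * minkowski N N := by
  obtain ⟨m₀, m₁, m₂⟩ := M
  obtain ⟨n₀, n₁, n₂⟩ := N
  simp only [minkowski] at *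
  have hid : m₀ ^ 2 * (-(n₀ * n₀) + n₁ * n₁ + n₂ * n₂) =
      n₁ ^ 2 + n₂ ^ 2 + (n₁ * m₂ - n₂ * m₁) ^ 2 := by
    linear_combination -(n₁ ^ 2 + n₂ ^ 2) * hM + (n₀ * m₀ + n₁ * m₁ + n₂ * m₂) * hN
  nlinarith [sq_nonneg (n₁ * m₂ - n₂ * m₁)]

lemma one_le_sq_fst_of_minkowski_self (hM : minkowski M M = -1) : 1 ≤ M.1 ^ 2 := by
  simp only [minkowski] at hM
  nlinarith [sq_nonneg M.2.1, sq_nonneg M.2.2]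

lemma minkowski_self_nonneg_of_orthogonal (hM : minkowski M M = -1) (hN : minkowski N M = 0) :
    0 ≤ minkowski N N :=
  nonneg_of_mul_nonneg_right ((add_nonneg (sq_nonneg _) (sq_nonneg _)).trans
    (sq_add_sq_le_mul_minkowski_self hM hN))
    (zero_lt_one.trans_le (one_le_sq_fst_of_minkowski_self hM))

lemma eq_zero_of_orthogonal_of_minkowski_self_eq_zero (hM : minkowski M M = -1)
    (hN : minkowski N M = 0) (hNN : minkowski N N = 0) : N = 0 := by
  have hbound := sq_add_sq_le_mul_minkowski_self hM hN
  have hM₀ := one_le_sq_fst_of_minkowski_self hM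
  obtain ⟨m₀, m₁, m₂⟩ := M
  obtain ⟨n₀, n₁, n₂⟩ := N
  simp only [minkowski] at *
  have hn₁ : n₁ = 0 := by nlinarith
  have hn₂ : n₂ = 0 := by nlinarith
  subst hn₁ hn₂
  have hn₀ : n₀ = 0 := by nlinarith
  simp [hn₀]

lemma minkowski_sq_le_of_orthogonal (hM : minkowski M M = -1) (hV : minkowski V M = 0)
    (hW : minkowski W M = 0) : minkowski W V ^ 2 ≤ minkowski W W * minkowski V V := by
  rcases (minkowski_self_nonneg_of_orthogonal hM hV).eq_or_lt with hVV | hVV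
  · simp [eq_zero_of_orthogonal_of_minkowski_self_eq_zero hM hV hVV.symm, minkowski]
  · have hU := minkowski_self_nonneg_of_orthogonal hM
      (N := minkowski V V • W - minkowski W V • V) (by simp [hV, hW])
    have hexp : minkowski (minkowski V V • W - minkowski W V • V)
        (minkowski V V • W - minkowski W V • V) =
        minkowski V V * (minkowski W W * minkowski V V - minkowski W V ^ 2) := by
      simp only [minkowski_sub_left, minkowski_sub_right, minkowski_smul_left,
        minkowski_smul_right, minkowski_comm V W]
      ring
    rw [hexp] at hU
    nlinarith

end Minkowski

namespace UpperHalfPlane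

/-- The isometry of `ℍ` onto the upper sheet of the hyperboloid `-x₀² + x₁² + x₂² = -1`. -/
def toHyperboloid (z : ℍ) : ℝ × ℝ × ℝ :=
  ((z.re ^ 2 + z.im ^ 2 + 1) / (2 * z.im), (z.re ^ 2 + z.im ^ 2 - 1) / (2 * z.im), z.re / z.im)

lemma minkowski_toHyperboloid (z w : ℍ) :
    minkowski z.toHyperboloid w.toHyperboloid = -cosh (dist z w) := by
  rw [cosh_dist']
  simp only [minkowski, toHyperboloid]
  field_simp [z.im_pos.ne', w.im_pos.ne']
  ring

@[simp] lemma minkowski_toHyperboloid_self (z : ℍ) :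
    minkowski z.toHyperboloid z.toHyperboloid = -1 := by
  simp [minkowski_toHyperboloid]

lemma toHyperboloid_fst_pos (z : ℍ) : 0 < z.toHyperboloid.1 := by
  have := z.im_pos
  simp only [toHyperboloid]
  positivity

lemma exists_toHyperboloid_eq {T : ℝ × ℝ × ℝ} (hT : minkowski T T = -1) (hT₀ : 0 < T.1) :
    ∃ z : ℍ, z.toHyperboloid = T := by
  obtain ⟨t₀, t₁, t₂⟩ := T
  simp only [minkowski] at hT hT₀
  have hpos : 0 < t₀ - t₁ := by nlinarith [sq_nonneg t₂]
  refine ⟨⟨⟨t₂ / (t₀ - t₁), 1 / (t₀ - t₁)⟩, by simpa using hpos⟩, ?_⟩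
  simp only [toHyperboloid, re, im, Prod.mk.injEq]
  refine ⟨?_, ?_, ?_⟩ <;> field_simp <;> nlinarith

lemma dist_eq_of_minkowski_toHyperboloid_eq {z w : ℍ} {r : ℝ} (hr : 0 ≤ r)
    (h : minkowski z.toHyperboloid w.toHyperboloid = -cosh r) : dist z w = r :=
  cosh_injOn dist_nonneg hr (by rw [minkowski_toHyperboloid] at h; linarith)

variable {p m q : ℍ} {r : ℝ}

lemma toHyperboloid_add_eq_of_dist_eq (hpm : dist p m = r) (hmq : dist m q = r)
    (hpq : dist p q = 2 * r) :
    p.toHyperboloid + q.toHyperboloid = (2 * cosh r) • m.toHyperboloid := by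
  rw [← sub_eq_zero]
  refine eq_zero_of_orthogonal_of_minkowski_self_eq_zero (minkowski_toHyperboloid_self m) ?_ ?_
  all_goals
    simp only [minkowski_add_left, minkowski_add_right, minkowski_sub_left, minkowski_sub_right,
      minkowski_smul_left, minkowski_smul_right, minkowski_toHyperboloid, dist_self, cosh_zero,
      dist_comm q p, dist_comm m p, dist_comm q m, hpm, hmq, hpq, cosh_two_mul, sinh_sq]
    ring

lemma dist_eq_two_mul_of_toHyperboloid_add_eq (hr : 0 ≤ r) (hpm : dist p m = r)
    (h : p.toHyperboloid + q.toHyperboloid = (2 * cosh r) • m.toHyperboloid) :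
    dist p q = 2 * r := by
  refine dist_eq_of_minkowski_toHyperboloid_eq (by positivity) ?_
  have := congrArg (minkowski p.toHyperboloid) h
  simp only [minkowski_add_right, minkowski_smul_right, minkowski_toHyperboloid_self,
    minkowski_toHyperboloid, hpm] at this ⊢
  rw [cosh_two_mul, sinh_sq]
  linarith

lemma exists_midpoint (p q : ℍ) :
    ∃ m : ℍ, dist p m = dist p q / 2 ∧ dist m q = dist p q / 2 := by
  have hc : 0 < cosh (dist p q / 2) := cosh_pos _
  have hcosh : cosh (dist p q) = 2 * cosh (dist p q / 2) ^ 2 - 1 := by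
    have h := cosh_two_mul (dist p q / 2)
    rw [mul_div_cancel₀ _ two_ne_zero, sinh_sq] at h
    linarith
  set T := (2 * cosh (dist p q / 2))⁻¹ • (p.toHyperboloid + q.toHyperboloid)
  have hTT : minkowski T T = -1 := by
    simp only [T, minkowski_add_left, minkowski_add_right, minkowski_smul_left,
      minkowski_smul_right, minkowski_toHyperboloid, dist_self, cosh_zero, dist_comm q p, hcosh]
    field_simp
    ring
  have hT₀ : 0 < T.1 := by
    have := p.toHyperboloid_fst_pos
    have := q.toHyperboloid_fst_pos
    simp only [T, Prod.smul_fst, Prod.fst_add, smul_eq_mul]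
    positivity
  obtain ⟨m, hm⟩ := exists_toHyperboloid_eq hTT hT₀
  refine ⟨m, ?_, ?_⟩ <;>
  · refine dist_eq_of_minkowski_toHyperboloid_eq (by positivity) ?_
    simp only [hm, T, minkowski_add_left, minkowski_add_right, minkowski_smul_left,
      minkowski_smul_right, minkowski_toHyperboloid, dist_self, cosh_zero, hcosh]
    field_simp
    ring

theorem two_mul_dist_sq_add_two_mul_sq_le (hpm : dist p m = r) (hmq : dist m q = r)
    (hpq : dist p q = 2 * r) (x : ℍ) :
    2 * dist x m ^ 2 + 2 * r ^ 2 ≤ dist x p ^ 2 + dist x q ^ 2 := by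
  have hmid := toHyperboloid_add_eq_of_dist_eq hpm hmq hpq
  refine two_mul_sq_add_two_mul_sq_le ?_ ?_
  · have := congrArg (minkowski x.toHyperboloid) hmid
    simp only [minkowski_add_right, minkowski_smul_right, minkowski_toHyperboloid] at this
    linarith
  · -- Cauchy–Schwarz in the spacelike plane orthogonal to `m`, for `p - q` and `x` projected
    have hV : minkowski (p.toHyperboloid - q.toHyperboloid) m.toHyperboloid = 0 := by
      simp only [minkowski_sub_left, minkowski_toHyperboloid, dist_comm q m, hpm, hmq, sub_self]
    have hW :
        minkowski (x.toHyperboloid - cosh (dist x m) • m.toHyperboloid) m.toHyperboloid = 0 := by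
      simp only [minkowski_sub_left, minkowski_smul_left, minkowski_toHyperboloid_self,
        minkowski_toHyperboloid]
      ring
    have hcs := minkowski_sq_le_of_orthogonal (minkowski_toHyperboloid_self m) hV hW
    simp only [minkowski_sub_left, minkowski_sub_right, minkowski_smul_left, minkowski_smul_right,
      minkowski_toHyperboloid, dist_self, cosh_zero, dist_comm m p, dist_comm q p, dist_comm m x,
      hpm, hmq, hpq, cosh_two_mul, sinh_sq] at hcs
    rw [sinh_sq, sinh_sq]
    convert hcs using 1 <;> ring

end UpperHalfPlane

theorem WithLp.prod_dist_sq_eq_of_L2 {α β : Type*} [PseudoMetricSpace α] [PseudoMetricSpace β]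
    (x y : WithLp 2 (α × β)) : dist x y ^ 2 = dist x.fst y.fst ^ 2 + dist x.snd y.snd ^ 2 := by
  rw [WithLp.prod_dist_eq_add (by norm_num), ENNReal.toReal_ofNat, ← sqrt_eq_rpow,
    sq_sqrt (by positivity), rpow_two, rpow_two]

def MinimizesDisplacement {X : Type*} [PseudoMetricSpace X] (g : X → X) (z : X) : Prop :=
  ∀ w, dist z (g z) ≤ dist w (g w)

lemma minimizesDisplacement_of_dist_eq_iInf {X : Type*} [PseudoMetricSpace X] {g : X → X} {z : X}
    (h : dist z (g z) = ⨅ w, dist w (g w)) : MinimizesDisplacement g z := fun w ↦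
  h ▸ ciInf_le ⟨0, forall_mem_range.2 fun _ ↦ dist_nonneg⟩ w

namespace MinimizesDisplacement

variable {g : ℍ ≃ᵢ ℍ} {z : ℍ}

theorem dist_apply_apply (hz : MinimizesDisplacement g z) :
    dist z (g (g z)) = 2 * dist z (g z) := by
  set l := dist z (g z)
  obtain ⟨m, hzm, hmg⟩ := exists_midpoint z (g z)
  have hm : dist m (g m) = l := by
    refine le_antisymm ?_ (hz m)
    calc dist m (g m) ≤ dist m (g z) + dist (g z) (g m) := dist_triangle _ _ _
      _ = l := by rw [g.dist_eq, hmg, hzm]; ring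
  have h₁ := toHyperboloid_add_eq_of_dist_eq hzm hmg (by ring)
  have h₂ := toHyperboloid_add_eq_of_dist_eq (p := g z) (m := g m) (q := g (g z))
    (by rw [g.dist_eq, hzm]) (by rw [g.dist_eq, hmg]) (by rw [g.dist_eq]; ring)
  have h₃ := toHyperboloid_add_eq_of_dist_eq (p := m) (m := g z) (q := g m) hmg
    (by rw [g.dist_eq, hzm]) (by rw [hm]; ring)
  refine dist_eq_two_mul_of_toHyperboloid_add_eq dist_nonneg rfl ?_
  have hcosh : 2 * cosh l = (2 * cosh (l / 2)) ^ 2 - 2 := by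
    have h := cosh_two_mul (l / 2)
    rw [mul_div_cancel₀ _ two_ne_zero, sinh_sq] at h
    linear_combination 2 * h
  rw [hcosh]
  linear_combination (norm := module) h₁ + h₂ + (2 * cosh (l / 2)) • h₃

theorem two_mul_dist_sq_add_le (hz : MinimizesDisplacement g z) (x : ℍ) :
    2 * dist x z ^ 2 + 2 * dist z (g z) ^ 2 ≤ dist x (g.symm z) ^ 2 + dist x (g z) ^ 2 :=
  two_mul_dist_sq_add_two_mul_sq_le (by rw [← g.dist_eq, g.apply_symm_apply]) rfl
    (by rw [← g.dist_eq, g.apply_symm_apply, hz.dist_apply_apply]) x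

end MinimizesDisplacement

theorem equidistant_hypersurfaces_disjoint
    (g₁ g₂ : UpperHalfPlane ≃ᵢ UpperHalfPlane) (z₁ z₂ : UpperHalfPlane)
    (h₁pos : 0 < dist z₁ (g₁ z₁))
    (h₁min : dist z₁ (g₁ z₁) = ⨅ w : UpperHalfPlane, dist w (g₁ w))
    (h₂min : dist z₂ (g₂ z₂) = ⨅ w : UpperHalfPlane, dist w (g₂ w)) :
    ¬ ∃ x : Bidisk,
        dist x (toBD (z₁, z₂)) = dist x (toBD (g₁ z₁, g₂ z₂)) ∧
        dist x (toBD (z₁, z₂)) = dist x (toBD (g₁.symm z₁, g₂.symm z₂)) := by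
  rintro ⟨x, hx, hx'⟩
  have hρ (p : ℍ × ℍ) : dist x (toBD p) ^ 2 = dist x.fst p.1 ^ 2 + dist x.snd p.2 ^ 2 :=
    WithLp.prod_dist_sq_eq_of_L2 x (toBD p)
  have h₁ := (minimizesDisplacement_of_dist_eq_iInf h₁min).two_mul_dist_sq_add_le x.fst
  have h₂ := (minimizesDisplacement_of_dist_eq_iInf h₂min).two_mul_dist_sq_add_le x.snd
  have e := congrArg (· ^ 2) hx
  have e' := congrArg (· ^ 2) hx'
  simp only [hρ] at e e'
  linarith [pow_pos h₁pos 2, sq_nonneg (dist z₂ (g₂ z₂))]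

end
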